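/- arXiv:2505.10207 — 9 statements merged into one kernel-verified Lean document; each statement's English description precedes it below -/
import Mathlib

section
/- If three graphs G1, G2, G3 on the same vertex set V each admit a proper k-coloring, then the temporal graph (G1, G2, G3) admits a temporal k^3-coloring. Concretely: there exist colorings c1, c2, c3 : V → [k]^3 such that each c_i is a proper coloring of the union of the snapshots at times i-1, i, i+1 (those that exist), and consecutive colorings c_i, c_{i+1} are compatible, meaning that for every edge uv present in G_i or G_{i+1}, c_i(u) ≠ c_{i+1}(v). -/
open SimpleGraph

/-- A coloring is proper for a graph if adjacent vertices get different colors. -/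
def ProperColoring {V α : Type*} (H : SimpleGraph V) (c : V → α) : Prop :=
  ∀ u v, H.Adj u v → c u ≠ c v

/-- Two colorings are compatible for two consecutive snapshots if, for every edge of
either snapshot, the first coloring of one endpoint differs from the second coloring
of the other endpoint. -/
def Compatible {V α : Type*} (G G' : SimpleGraph V) (c c' : V → α) : Prop :=
  ∀ u v, (G ⊔ G').Adj u v → c u ≠ c' v

/-- The union of the snapshots at times `i-1`, `i`, `i+1` (those that exist, with
snapshots indexed by `1,…,T`). -/
def Smash {V : Type*} (G : ℕ → SimpleGraph V) (T i : ℕ) : SimpleGraph V :=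
  (if 2 ≤ i then G (i - 1) else ⊥) ⊔ G i ⊔ (if i < T then G (i + 1) else ⊥)

/-- A temporal coloring of a temporal graph with snapshots `G 1, …, G T`. -/
def TemporalColoring {V α : Type*} (T : ℕ) (G : ℕ → SimpleGraph V) (c : ℕ → V → α) : Prop :=
  (∀ i, 1 ≤ i → i ≤ T → ProperColoring (Smash G T i) (c i)) ∧
  (∀ i, 1 ≤ i → i < T → Compatible (G i) (G (i + 1)) (c i) (c (i + 1)))

/-- The temporal chromatic number: the least `k` admitting a temporal `k`-coloring. -/
noncomputable def temporalChromaticNumber {V : Type*} (T : ℕ) (G : ℕ → SimpleGraph V) : ℕ :=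
  sInf {k | ∃ c : ℕ → V → Fin k, TemporalColoring T G c}

/-- A graph is `d`-degenerate if every nonempty (finite) subgraph has a vertex of
degree at most `d`. -/
def Degenerate {V : Type*} (H : SimpleGraph V) (d : ℕ) : Prop :=
  ∀ s : Finset V, s.Nonempty → ∃ v ∈ s, ({u | u ∈ s ∧ H.Adj v u} : Set V).ncard ≤ d

/-- A graph is `Δ`-bounded if every vertex has degree at most `Δ`. -/
def DegLE {V : Type*} (H : SimpleGraph V) (Δ : ℕ) : Prop :=
  ∀ v, (H.neighborSet v).ncard ≤ Δ

/-- If `G1, G2, G3` each admit a proper `k`-coloring, the temporal graph `(G1,G2,G3)`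
admits a temporal `k^3`-coloring. -/
theorem statement0 {V : Type*} (k : ℕ) (G1 G2 G3 : SimpleGraph V)
    (h1 : G1.Colorable k) (h2 : G2.Colorable k) (h3 : G3.Colorable k) :
    ∃ c1 c2 c3 : V → Fin k × Fin k × Fin k,
      ProperColoring (G1 ⊔ G2) c1 ∧
      ProperColoring (G1 ⊔ G2 ⊔ G3) c2 ∧
      ProperColoring (G2 ⊔ G3) c3 ∧
      Compatible G1 G2 c1 c2 ∧
      Compatible G2 G3 c2 c3 := by
  obtain ⟨f1⟩ := h1
  obtain ⟨f2⟩ := h2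
  obtain ⟨f3⟩ := h3
  set c : V → Fin k × Fin k × Fin k := fun v => (f1 v, f2 v, f3 v) with hc
  have key : ∀ u v : V, G1.Adj u v ∨ G2.Adj u v ∨ G3.Adj u v → c u ≠ c v := by
    intro u v h heq
    have e1 : f1 u = f1 v := congrArg Prod.fst heq
    have e2 : f2 u = f2 v := congrArg (fun p => p.2.1) heq
    have e3 : f3 u = f3 v := congrArg (fun p => p.2.2) heq
    rcases h with h | h | h
    · exact f1.valid h e1
    · exact f2.valid h e2
    · exact f3.valid h e3
  refine ⟨c, c, c, ?_, ?_, ?_, ?_, ?_⟩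
  · intro u v h; exact key u v (by simpa [SimpleGraph.sup_adj] using Or.imp_right Or.inl h)
  · intro u v h; simp only [SimpleGraph.sup_adj] at h; exact key u v (by tauto)
  · intro u v h; exact key u v (by simpa [SimpleGraph.sup_adj] using Or.inr h)
  · intro u v h; exact key u v (by simpa [SimpleGraph.sup_adj] using Or.imp_right Or.inl h)
  · intro u v h; exact key u v (by simpa [SimpleGraph.sup_adj] using Or.inr h)
end

section
/- Let 𝒢 = (H_1, H_1, H_2, H_2, ..., H_{T/2}, H_{T/2}) be a temporal graph in which each snapshot is duplicated (i.e., G_{2i-1} = G_{2i} = H_i for all i). If every H_i admits a proper k-coloring, then 𝒢 admits a temporal k^2-coloring. -/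
open SimpleGraph

/-- If each snapshot is duplicated (`G (2i-1) = G (2i) = H i`) and every `H i` is
`k`-colorable, then the temporal graph admits a temporal `k^2`-coloring. -/
theorem statement2 {V : Type*} (k m : ℕ) (H : ℕ → SimpleGraph V)
    (hH : ∀ i, (H i).Colorable k) :
    ∃ c : ℕ → V → Fin k × Fin k,
      TemporalColoring (2 * m) (fun j => H ((j + 1) / 2)) c := by
  classical
  let f : ℕ → V → Fin k := fun i => ((hH i).some : (H i).Coloring (Fin k))
  have hf : ∀ i {u v : V}, (H i).Adj u v → f i u ≠ f i v := by
    intro i u v h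
    exact (hH i).some.valid h
  let d : ℕ → V → Fin k × Fin k := fun i v => (f (i + i % 2) v, f (i + 1 - i % 2) v)
  have sel : ∀ i j v, j = i ∨ j = i + 1 →
      (if j % 2 = 0 then (d i v).1 else (d i v).2) = f j v := by
    intro i j v h
    rcases Nat.mod_two_eq_zero_or_one i with hi | hi <;> rcases h with rfl | rfl
    · simp [d, hi]
    · have h2 : (i + 1) % 2 = 1 := by omega
      simp [d, hi, h2]
    · simp [d, hi]
    · have h2 : (i + 1) % 2 = 0 := by omega
      simp [d, hi, h2]
  have dist : ∀ i j (u v : V), j = i ∨ j = i + 1 → (H j).Adj u v → d i u ≠ d i v := by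
    intro i j u v h hadj heq
    exact hf j hadj (by rw [← sel i j u h, ← sel i j v h, heq])
  have cross : ∀ i (u v : V), (H (i + 1)).Adj u v → d i u ≠ d (i + 1) v := by
    intro i u v hadj heq
    have h1 := sel i (i + 1) u (Or.inr rfl)
    have h2 := sel (i + 1) (i + 1) v (Or.inl rfl)
    rw [heq] at h1
    exact hf (i + 1) hadj (h1.symm.trans h2)
  refine ⟨fun t => d (t / 2), ?_, ?_⟩
  · intro t h1 h2 u v hadj
    simp only [Smash, SimpleGraph.sup_adj] at hadj
    rcases hadj with (hadj | hadj) | hadj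
    · split_ifs at hadj with ht
      · exact dist (t / 2) ((t - 1 + 1) / 2) u v (by omega) hadj
      · exact absurd hadj (by simp)
    · exact dist (t / 2) ((t + 1) / 2) u v (by omega) hadj
    · split_ifs at hadj with ht
      · exact dist (t / 2) ((t + 1 + 1) / 2) u v (by omega) hadj
      · exact absurd hadj (by simp)
  · intro t h1 h2 u v hadj
    simp only [SimpleGraph.sup_adj] at hadj
    show d (t / 2) u ≠ d ((t + 1) / 2) v
    rcases Nat.mod_two_eq_zero_or_one t with ht | ht
    · have e1 : (t + 1) / 2 = t / 2 := by omega
      rw [e1]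
      rcases hadj with hadj | hadj
      · exact dist (t / 2) ((t + 1) / 2) u v (by omega) hadj
      · exact dist (t / 2) ((t + 1 + 1) / 2) u v (by omega) hadj
    · have e1 : (t + 1) / 2 = t / 2 + 1 := by omega
      rw [e1]
      rcases hadj with hadj | hadj
      · have e2 : (t + 1) / 2 = t / 2 + 1 := e1
        rw [e2] at hadj
        exact cross (t / 2) u v hadj
      · have e2 : (t + 1 + 1) / 2 = t / 2 + 1 := by omega
        rw [e2] at hadj
        exact cross (t / 2) u v hadj
end

section
/- In any temporal 2-coloring (c_1,...,c_T) of a temporal graph, if a vertex u satisfies c_j(u) ≠ c_{j-1}(u) for some j ≥ 2, then u has no neighbors in G_j and no neighbors in G_{j-1}. -/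
open SimpleGraph

/-- In a temporal 2-coloring, if a vertex changes its color between times `j-1` and `j`,
then it has no neighbors in `G j` nor in `G (j-1)`. -/
theorem statement4 {V : Type*} (T : ℕ) (G : ℕ → SimpleGraph V)
    (c : ℕ → V → Fin 2) (hc : TemporalColoring T G c)
    (j : ℕ) (hj2 : 2 ≤ j) (hjT : j ≤ T)
    (u : V) (hchange : c j u ≠ c (j - 1) u) :
    ∀ v, ¬ (G j).Adj u v ∧ ¬ (G (j - 1)).Adj u v := by
  intro v
  have fin2 : ∀ a b d : Fin 2, a ≠ b → a ≠ d → b = d := by decide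
  have hj1 : 1 ≤ j - 1 := by omega
  have hj1T : j - 1 ≤ T := by omega
  have hj1lt : j - 1 < T := by omega
  have hcomp := hc.2 (j - 1) hj1 hj1lt
  have hjeq : j - 1 + 1 = j := by omega
  rw [hjeq] at hcomp
  constructor
  · intro hadj
    have hprop := hc.1 j (by omega) hjT u v (by
      simp only [Smash, SimpleGraph.sup_adj]
      exact Or.inl (Or.inr hadj))
    have := fin2 (c j u) (c (j-1) u) (c j v) hchange hprop
    exact hcomp u v (by simp [SimpleGraph.sup_adj, hadj]) this
  · intro hadj
    have hprop := hc.1 (j-1) hj1 hj1T u v (by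
      simp only [Smash, SimpleGraph.sup_adj]
      exact Or.inl (Or.inr hadj))
    have := fin2 (c (j-1) u) (c j u) (c (j-1) v) (Ne.symm hchange) hprop
    exact hcomp v u (by simp [SimpleGraph.sup_adj, hadj.symm]) this.symm
end

section
/- There exist three paths P_1, P_2, P_3 on a common set of 6 vertices such that the union P_1 ∪ P_2 ∪ P_3 is the complete graph K_6. Consequently, the bound of 6 colors for unions of three trees is tight. -/
open SimpleGraph

/-!
Work in `ℤ/6`, realised as `Fin 6`. The zigzag path `0, 1, 5, 2, 4, 3` has one edge of
difference `3` and, for each difference `±1`, `±2`, two edges that are translates of each other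
by `3`. Hence its translates by `0, 1, 2` cover the three edges of difference `3` and the six
edges of each difference `±1`, `±2`: all fifteen edges of `K_6`.
-/

def zigzag : Fin 6 ≃ Fin 6 := ⟨![0, 1, 5, 2, 4, 3], ![0, 1, 3, 5, 4, 2], by decide, by decide⟩

def zigzagPath (k : Fin 6) : SimpleGraph (Fin 6) :=
  (pathGraph 6).map (zigzag.trans (Equiv.addRight k)).toEmbedding

lemma nonempty_zigzagPath_iso_pathGraph (k : Fin 6) : Nonempty (zigzagPath k ≃g pathGraph 6) :=
  ⟨(Iso.map _ _).symm⟩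

lemma zigzagPath_sup_eq_top : zigzagPath 0 ⊔ zigzagPath 1 ⊔ zigzagPath 2 = ⊤ := by
  ext u v
  simp only [zigzagPath, sup_adj, map_adj', top_adj, pathGraph_adj, Equiv.coe_toEmbedding,
    Equiv.trans_apply, Equiv.coe_addRight, zigzag]
  revert u v
  decide

/-- There exist three Hamiltonian paths on 6 vertices whose union is `K_6`. -/
theorem statement6 :
    ∃ P1 P2 P3 : SimpleGraph (Fin 6),
      Nonempty (P1 ≃g SimpleGraph.pathGraph 6) ∧
      Nonempty (P2 ≃g SimpleGraph.pathGraph 6) ∧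
      Nonempty (P3 ≃g SimpleGraph.pathGraph 6) ∧
      P1 ⊔ P2 ⊔ P3 = ⊤ :=
  ⟨_, _, _, nonempty_zigzagPath_iso_pathGraph 0, nonempty_zigzagPath_iso_pathGraph 1,
    nonempty_zigzagPath_iso_pathGraph 2, zigzagPath_sup_eq_top⟩
end

section
/- Every temporal graph whose snapshots are all bipartite admits a temporal 8-coloring; that is, the maximal temporal chromatic number of temporal graphs with bipartite snapshots is exactly 8. -/
open SimpleGraph

/-!
Color vertex `v` at time `i` by the triple of its colors in fixed proper colorings of the
three snapshots `G (i-1)`, `G i`, `G (i+1)`, storing the color from `G j` in slot `j % 3`.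
An edge of any snapshot `G j` meeting times `i` and `i'` within distance one of `j` is then
seen by both colorings in the same slot `j % 3`, where its endpoints already differ; with
`k = 2` this gives `2 ^ 3 = 8` colors.  For tightness, the three bit-graphs on `Fin 8`, which
split the vertices by one of their three binary digits, are bipartite with union `K₈`, so
the middle coloring of a temporal coloring must be injective.
-/

open Function

def nearMod3 (i r : ℕ) : ℕ :=
  if i % 3 = r then i else if (i + 1) % 3 = r then i + 1 else i - 1

lemma nearMod3_mod_three {i j : ℕ} (h₁ : i ≤ j + 1) (h₂ : j ≤ i + 1) :
    nearMod3 i (j % 3) = j := by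
  unfold nearMod3
  split_ifs <;> omega

section Temporal

variable {V α β : Type*} {T : ℕ} {G : ℕ → SimpleGraph V}

lemma ProperColoring.injective {c : V → α} (h : ProperColoring ⊤ c) : Injective c := by
  intro u v huv
  by_contra hne
  exact h u v hne huv

def stackColoring (b : ℕ → V → α) (i : ℕ) (v : V) : Fin 3 → α :=
  fun r => b (nearMod3 i r) v

lemma stackColoring_ne {b : ℕ → V → α} {i i' j : ℕ} {u v : V}
    (hi : i ≤ j + 1 ∧ j ≤ i + 1) (hi' : i' ≤ j + 1 ∧ j ≤ i' + 1) (huv : b j u ≠ b j v) :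
    stackColoring b i u ≠ stackColoring b i' v := fun h => by
  have := congrFun h ⟨j % 3, Nat.mod_lt _ (by norm_num)⟩
  simp only [stackColoring, nearMod3_mod_three hi.1 hi.2, nearMod3_mod_three hi'.1 hi'.2] at this
  exact huv this

lemma temporalColoring_stackColoring {b : ℕ → V → α}
    (hb : ∀ i, 1 ≤ i → i ≤ T → ProperColoring (G i) (b i)) :
    TemporalColoring T G (stackColoring b) := by
  refine ⟨fun i h₁ h₂ u v hadj => ?_, fun i h₁ h₂ u v hadj => ?_⟩
  · rcases hadj with (hadj | hadj) | hadj
    · split_ifs at hadj with h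
      · exact stackColoring_ne (j := i - 1) (by omega) (by omega)
          (hb (i - 1) (by omega) (by omega) u v hadj)
      · exact ((bot_adj u v).mp hadj).elim
    · exact stackColoring_ne (j := i) (by omega) (by omega) (hb i h₁ h₂ u v hadj)
    · split_ifs at hadj with h
      · exact stackColoring_ne (j := i + 1) (by omega) (by omega)
          (hb (i + 1) (by omega) (by omega) u v hadj)
      · exact ((bot_adj u v).mp hadj).elim
  · rcases hadj with hadj | hadj
    · exact stackColoring_ne (j := i) (by omega) (by omega) (hb i h₁ (by omega) u v hadj)
    · exact stackColoring_ne (j := i + 1) (by omega) (by omega)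
        (hb (i + 1) (by omega) (by omega) u v hadj)

lemma TemporalColoring.comp_injective {c : ℕ → V → α} {f : α → β} (hf : Injective f)
    (h : TemporalColoring T G c) : TemporalColoring T G (fun i => f ∘ c i) :=
  ⟨fun i h₁ h₂ u v hadj => hf.ne (h.1 i h₁ h₂ u v hadj),
    fun i h₁ h₂ u v hadj => hf.ne (h.2 i h₁ h₂ u v hadj)⟩

theorem exists_temporalColoring_of_coloring [Nonempty α]
    (hcol : ∀ i, 1 ≤ i → i ≤ T → Nonempty ((G i).Coloring α)) :
    ∃ c : ℕ → V → Fin 3 → α, TemporalColoring T G c := by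
  have hb : ∀ i, ∃ b : V → α, 1 ≤ i → i ≤ T → ProperColoring (G i) b := by
    intro i
    by_cases h : 1 ≤ i ∧ i ≤ T
    · obtain ⟨C⟩ := hcol i h.1 h.2
      exact ⟨C, fun _ _ u v huv => C.valid huv⟩
    · exact ⟨fun _ => Classical.arbitrary α, fun h₁ h₂ => absurd ⟨h₁, h₂⟩ h⟩
  choose b hb using hb
  exact ⟨stackColoring b, temporalColoring_stackColoring hb⟩

theorem exists_temporalColoring_fin_pow {k : ℕ} (hk : 0 < k)
    (hcol : ∀ i, 1 ≤ i → i ≤ T → (G i).Colorable k) :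
    ∃ c : ℕ → V → Fin (k ^ 3), TemporalColoring T G c := by
  have : Nonempty (Fin k) := ⟨⟨0, hk⟩⟩
  obtain ⟨c, hc⟩ := exists_temporalColoring_of_coloring hcol
  exact ⟨_, hc.comp_injective finFunctionFinEquiv.injective⟩

theorem TemporalColoring.card_le_of_smash_eq_top [Fintype V] [Fintype α] {c : ℕ → V → α}
    (h : TemporalColoring T G c) {i : ℕ} (h₁ : 1 ≤ i) (h₂ : i ≤ T) (htop : Smash G T i = ⊤) :
    Fintype.card V ≤ Fintype.card α :=
  Fintype.card_le_of_injective _ (ProperColoring.injective (htop ▸ h.1 i h₁ h₂))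

theorem temporalChromaticNumber_eq {n : ℕ} (hn : ∃ c : ℕ → V → Fin n, TemporalColoring T G c)
    (hle : ∀ k, ∀ c : ℕ → V → Fin k, TemporalColoring T G c → n ≤ k) :
    temporalChromaticNumber T G = n :=
  le_antisymm (Nat.sInf_le hn) (le_csInf ⟨n, hn⟩ fun k ⟨c, hc⟩ => hle k c hc)

end Temporal

def bitGraph (k : ℕ) : SimpleGraph (Fin 8) :=
  (⊤ : SimpleGraph Bool).comap fun v => v.val.testBit k

lemma bitGraph_colorable (k : ℕ) : (bitGraph k).Colorable 2 :=
  Colorable.of_hom (Hom.comap _ _) (by simpa using (⊤ : SimpleGraph Bool).colorable_of_fintype)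

lemma bitGraph_sup_eq_top : bitGraph 0 ⊔ bitGraph 1 ⊔ bitGraph 2 = ⊤ := by
  ext u v
  simp only [sup_adj, bitGraph, comap_adj, top_adj]
  revert u v
  decide

/-- Every temporal graph whose snapshots are all bipartite (2-colorable) admits a
temporal 8-coloring, and this is tight: there exists such a temporal graph with
temporal chromatic number exactly 8. -/
theorem statement9 :
    (∀ (V : Type) (T : ℕ) (G : ℕ → SimpleGraph V),
      (∀ i, 1 ≤ i → i ≤ T → (G i).Colorable 2) →
      ∃ c : ℕ → V → Fin 8, TemporalColoring T G c) ∧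
    (∃ (G : ℕ → SimpleGraph (Fin 8)) (T : ℕ),
      (∀ i, 1 ≤ i → i ≤ T → (G i).Colorable 2) ∧
      temporalChromaticNumber T G = 8) := by
  have upper : ∀ (V : Type) (T : ℕ) (G : ℕ → SimpleGraph V),
      (∀ i, 1 ≤ i → i ≤ T → (G i).Colorable 2) →
      ∃ c : ℕ → V → Fin 8, TemporalColoring T G c :=
    fun _ _ _ => exists_temporalColoring_fin_pow two_pos
  have hsmash : Smash (fun i => bitGraph (i - 1)) 3 2 = ⊤ := by
    simpa [Smash] using bitGraph_sup_eq_top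
  refine ⟨upper, fun i => bitGraph (i - 1), 3, fun i _ _ => bitGraph_colorable (i - 1), ?_⟩
  refine temporalChromaticNumber_eq (upper _ _ _ fun i _ _ => bitGraph_colorable (i - 1)) ?_
  intro k c hc
  simpa using hc.card_le_of_smash_eq_top (by norm_num) (by norm_num) hsmash
end

section
/- For every positive integer d, there exist three d-degenerate graphs G_1, G_2, G_3 on a common set of 5d vertices such that G_1 ∪ G_2 ∪ G_3 is the complete graph K_{5d}. -/
open SimpleGraph

/-!
Split the `5d` vertices into five blocks of `d` vertices. A map `s` on the blocks whose only
cycles are fixed points yields the graph joining block `b` to block `s b` completely (and making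
block `b` a clique when `s b = b`). Ordering the vertices block by block along a rank that `s`
increases, every vertex has all its later neighbours inside the single block `s b`, so the graph
is `d`-degenerate. Three such maps on five blocks cover every pair of blocks and every block.
-/

theorem degenerate_of_forward_ncard_le {V α : Type*} [Finite V] [LinearOrder α]
    {H : SimpleGraph V} {d : ℕ} (f : V → α) (hf : f.Injective)
    (h : ∀ v, {u | H.Adj v u ∧ f v < f u}.ncard ≤ d) : Degenerate H d := by
  intro s hs
  obtain ⟨v, hv, hmin⟩ := s.exists_min_image f hs
  refine ⟨v, hv, le_trans (Set.ncard_le_ncard ?_ (Set.toFinite _)) (h v)⟩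
  rintro u ⟨hu, hadj⟩
  exact ⟨hadj, (hmin u hu).lt_of_ne (hf.ne hadj.ne)⟩

/-- A reflexive pair `R b b` makes block `b` a clique. -/
def blockGraph {V β : Type*} (π : V → β) (R : β → β → Prop) : SimpleGraph V :=
  fromRel fun u v => R (π u) (π v)

section blockGraph

variable {V β : Type*} (π : V → β)

theorem blockGraph_adj (R : β → β → Prop) (u v : V) :
    (blockGraph π R).Adj u v ↔ u ≠ v ∧ (R (π u) (π v) ∨ R (π v) (π u)) :=
  fromRel_adj _ u v

theorem blockGraph_sup (R₁ R₂ : β → β → Prop) :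
    blockGraph π R₁ ⊔ blockGraph π R₂ = blockGraph π (R₁ ⊔ R₂) := by
  ext u v
  simp only [sup_adj, blockGraph_adj, Pi.sup_apply, sup_Prop_eq]
  tauto

theorem blockGraph_eq_top {R : β → β → Prop} (h : ∀ b c, R b c ∨ R c b) :
    blockGraph π R = ⊤ := by
  ext u v
  simp only [blockGraph_adj, top_adj, and_iff_left_iff_imp]
  exact fun _ => h _ _

theorem degenerate_blockGraph_of_rank_lt {α : Type*} [Finite V] [LinearOrder V] [LinearOrder α]
    {d : ℕ} (s : β → β) (ρ : β → α) (hfib : ∀ c, (π ⁻¹' {c}).ncard ≤ d)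
    (hρ : ∀ b, s b ≠ b → ρ b < ρ (s b)) :
    Degenerate (blockGraph π fun b c => s b = c) d := by
  refine degenerate_of_forward_ncard_le (fun v => toLex (ρ (π v), v))
    (fun u v h => congrArg Prod.snd (toLex.injective h)) fun v => ?_
  refine le_trans (Set.ncard_le_ncard ?_ (Set.toFinite _)) (hfib (s (π v)))
  rintro u ⟨hadj, hlt⟩
  have hρle : ρ (π v) ≤ ρ (π u) := Prod.Lex.monotone_fst _ _ hlt.le
  rcases ((blockGraph_adj π _ v u).1 hadj).2 with hvu | huv
  · exact hvu.symm
  · by_cases hfix : s (π u) = π u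
    · show π u = s (π v)
      rw [← huv, hfix, hfix]
    · exact absurd (huv ▸ hρ _ hfix) hρle.not_gt

end blockGraph

def block {m d : ℕ} (v : Fin (m * d)) : Fin m :=
  (finProdFinEquiv.symm v).1

theorem ncard_block_preimage_le {m d : ℕ} (c : Fin m) :
    (block ⁻¹' {c} : Set (Fin (m * d))).ncard ≤ d := by
  calc (block ⁻¹' {c} : Set (Fin (m * d))).ncard
      ≤ (Set.univ : Set (Fin d)).ncard := by
        refine Set.ncard_le_ncard_of_injOn (fun v => (finProdFinEquiv.symm v).2)
          (fun _ _ => Set.mem_univ _) ?_ Set.finite_univ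
        intro u hu v hv h
        exact finProdFinEquiv.symm.injective (Prod.ext (hu.trans hv.symm) h)
    _ = d := by simp

theorem statement11_general (d : ℕ) :
    ∃ G1 G2 G3 : SimpleGraph (Fin (5 * d)),
      Degenerate G1 d ∧ Degenerate G2 d ∧ Degenerate G3 d ∧ G1 ⊔ G2 ⊔ G3 = ⊤ := by
  refine ⟨blockGraph block fun b c => ![1, 2, 3, 4, 4] b = c,
    blockGraph block fun b c => ![2, 1, 4, 0, 1] b = c,
    blockGraph block fun b c => ![0, 3, 2, 3, 0] b = c,
    degenerate_blockGraph_of_rank_lt _ _ (![0, 1, 2, 3, 4] : Fin 5 → ℕ)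
      ncard_block_preimage_le (by decide),
    degenerate_blockGraph_of_rank_lt _ _ (![1, 4, 2, 0, 3] : Fin 5 → ℕ)
      ncard_block_preimage_le (by decide),
    degenerate_blockGraph_of_rank_lt _ _ (![2, 1, 4, 3, 0] : Fin 5 → ℕ)
      ncard_block_preimage_le (by decide),
    ?_⟩
  rw [blockGraph_sup, blockGraph_sup]
  exact blockGraph_eq_top _ (by simp only [Pi.sup_apply, sup_Prop_eq]; decide)

/-- For every positive `d`, there are three `d`-degenerate graphs on `5d` vertices
whose union is the complete graph `K_{5d}`. -/
theorem statement11 (d : ℕ) (hd : 0 < d) :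
    ∃ G1 G2 G3 : SimpleGraph (Fin (5 * d)),
      Degenerate G1 d ∧ Degenerate G2 d ∧ Degenerate G3 d ∧ G1 ⊔ G2 ⊔ G3 = ⊤ :=
  statement11_general d
end

section
/- Every temporal graph 𝒢 = (G_1,...,G_T) whose snapshots are all Δ-bounded admits a temporal (5Δ+1)-coloring: χ^t(𝒢) ≤ 5Δ+1. -/
open SimpleGraph

/-!
Colour the snapshots greedily in increasing time. At time `i` a vertex `v` must avoid the
current colours of its at most `3Δ` neighbours in `G_{i-1} ∪ G_i ∪ G_{i+1}` (properness) and the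
previous colours of its at most `2Δ` neighbours in `G_{i-1} ∪ G_i` (compatibility), so each
vertex has a list of more than `3Δ` admissible colours out of `5Δ + 1`, and a graph of maximum
degree `3Δ` can always be coloured from such lists.
-/

namespace DegLE

variable {V : Type*}

lemma bot (d : ℕ) : DegLE (⊥ : SimpleGraph V) d := by
  intro v
  simp [neighborSet]

lemma mono {H : SimpleGraph V} {a b : ℕ} (hA : DegLE H a) (hab : a ≤ b) : DegLE H b :=
  fun v => (hA v).trans hab

lemma sup {A B : SimpleGraph V} {a b : ℕ} (hA : DegLE A a) (hB : DegLE B b) :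
    DegLE (A ⊔ B) (a + b) := by
  intro v
  rw [neighborSet_sup]
  exact (Set.ncard_union_le _ _).trans (Nat.add_le_add (hA v) (hB v))

lemma card_image_neighbors_le [Fintype V] {H : SimpleGraph V} {d : ℕ}
    [DecidableRel H.Adj] {α : Type*} [DecidableEq α] (hH : DegLE H d) (c : V → α) (v : V) :
    ((Finset.univ.filter (H.Adj v)).image c).card ≤ d := by
  refine Finset.card_image_le.trans ?_
  have hcoe : ((Finset.univ.filter (H.Adj v) : Finset V) : Set V) = H.neighborSet v := by
    ext u; simp
  rw [← Set.ncard_coe_finset, hcoe]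
  exact hH v

lemma exists_listColoring [Fintype V] {H : SimpleGraph V} {d : ℕ} (hH : DegLE H d)
    {α : Type*} (L : V → Finset α) (hL : ∀ v, d < (L v).card) :
    ∃ c : V → α, ProperColoring H c ∧ ∀ v, c v ∈ L v := by
  classical
  suffices ∀ s : Finset V, ∃ c : V → α,
      (∀ u ∈ s, ∀ v ∈ s, H.Adj u v → c u ≠ c v) ∧ ∀ v, c v ∈ L v by
    obtain ⟨c, hproper, hL⟩ := this Finset.univ
    exact ⟨c, fun u v => hproper u (Finset.mem_univ u) v (Finset.mem_univ v), hL⟩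
  intro s
  induction s using Finset.induction_on with
  | empty =>
    have hne : ∀ v, (L v).Nonempty := fun v => Finset.card_pos.mp (Nat.zero_lt_of_lt (hL v))
    exact ⟨fun v => (hne v).choose, by simp, fun v => (hne v).choose_spec⟩
  | @insert w s hw ih =>
    obtain ⟨c, hproper, hcL⟩ := ih
    obtain ⟨x, hxL, hxfree⟩ := Finset.exists_mem_notMem_of_card_lt_card
      ((hH.card_image_neighbors_le c w).trans_lt (hL w))
    have hx : ∀ u, H.Adj w u → c u ≠ x := fun u hu hcu =>
      hxfree (Finset.mem_image.2 ⟨u, by simpa using hu, hcu⟩)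
    refine ⟨Function.update c w x, ?_, ?_⟩
    · intro u hu v hv huv
      rcases Finset.mem_insert.1 hu with rfl | hu <;> rcases Finset.mem_insert.1 hv with rfl | hv
      · exact absurd huv (H.loopless.irrefl _)
      · rw [Function.update_self, Function.update_of_ne (huv.ne.symm)]
        exact (hx v huv).symm
      · rw [Function.update_self, Function.update_of_ne huv.ne]
        exact hx u huv.symm
      · rw [Function.update_of_ne (ne_of_mem_of_not_mem hu hw),
          Function.update_of_ne (ne_of_mem_of_not_mem hv hw)]
        exact hproper u hu v hv huv
    · intro v
      by_cases hvw : v = w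
      · subst hvw; simpa using hxL
      · simpa [Function.update_of_ne hvw] using hcL v

lemma exists_proper_avoiding [Fintype V] {α : Type*} [Fintype α] {H K : SimpleGraph V}
    {a b : ℕ} (hH : DegLE H a) (hK : DegLE K b) (hcard : a + b < Fintype.card α)
    (p : V → α) : ∃ c : V → α, ProperColoring H c ∧ ∀ u v, K.Adj u v → p u ≠ c v := by
  classical
  obtain ⟨c, hproper, hc⟩ := hH.exists_listColoring
    (fun v => Finset.univ \ (Finset.univ.filter (K.Adj v)).image p) fun v => by
      rw [Finset.card_sdiff_of_subset (Finset.subset_univ _), Finset.card_univ]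
      have := hK.card_image_neighbors_le p v
      omega
  refine ⟨c, hproper, fun u v huv hpc => ?_⟩
  have := hc v
  simp only [Finset.mem_sdiff, Finset.mem_univ, Finset.mem_image, Finset.mem_filter,
    true_and] at this
  exact this ⟨u, huv.symm, hpc⟩

end DegLE

section Temporal

variable {V α : Type*}

lemma degLE_smash {G : ℕ → SimpleGraph V} {Δ : ℕ} (hG : ∀ i, DegLE (G i) Δ) (T i : ℕ) :
    DegLE (Smash G T i) (3 * Δ) := by
  have hside : ∀ (P : Prop) [Decidable P] (j : ℕ), DegLE (if P then G j else ⊥) Δ := by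
    intro P _ j
    split_ifs
    exacts [hG j, DegLE.bot Δ]
  exact (((hside _ _).sup (hG i)).sup (hside _ _)).mono (by omega)

lemma exists_temporalColoring_of_step [Nonempty α] (T : ℕ) (G : ℕ → SimpleGraph V)
    (step : ∀ i (p : V → α), ∃ c : V → α,
      ProperColoring (Smash G T (i + 1)) c ∧ Compatible (G i) (G (i + 1)) p c) :
    ∃ c : ℕ → V → α, TemporalColoring T G c := by
  choose next hproper hcompat using step
  let c : ℕ → V → α := fun i => Nat.rec (fun _ => Classical.arbitrary α) next i
  refine ⟨c, fun i hi _ => ?_, fun i _ _ => hcompat i (c i)⟩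
  obtain ⟨j, rfl⟩ : ∃ j, i = j + 1 := ⟨i - 1, by omega⟩
  exact hproper j (c j)

lemma exists_temporalColoring_of_forall_degLE [Fintype V] {Δ : ℕ} (T : ℕ)
    (G : ℕ → SimpleGraph V) (hG : ∀ i, DegLE (G i) Δ) :
    ∃ c : ℕ → V → Fin (5 * Δ + 1), TemporalColoring T G c :=
  exists_temporalColoring_of_step T G fun i p =>
    (degLE_smash hG T (i + 1)).exists_proper_avoiding ((hG i).sup (hG (i + 1)))
      (by simp only [Fintype.card_fin]; omega) p

def truncate (G : ℕ → SimpleGraph V) (T : ℕ) (i : ℕ) : SimpleGraph V :=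
  if 1 ≤ i ∧ i ≤ T then G i else ⊥

lemma smash_truncate {G : ℕ → SimpleGraph V} {T i : ℕ} (hi : 1 ≤ i) (hiT : i ≤ T) :
    Smash (truncate G T) T i = Smash G T i := by
  unfold Smash truncate
  split_ifs <;> first | rfl | omega

lemma TemporalColoring.of_truncate {T : ℕ} {G : ℕ → SimpleGraph V} {c : ℕ → V → α}
    (hc : TemporalColoring T (truncate G T) c) : TemporalColoring T G c := by
  refine ⟨fun i hi hiT => smash_truncate hi hiT ▸ hc.1 i hi hiT, fun i hi hiT => ?_⟩
  have := hc.2 i hi hiT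
  unfold truncate at this
  rwa [if_pos ⟨hi, hiT.le⟩, if_pos ⟨by omega, hiT⟩] at this

end Temporal

/-- Every temporal graph whose snapshots are all `Δ`-bounded admits a temporal
`(5Δ+1)`-coloring. -/
theorem statement14 {V : Type*} [Fintype V] (Δ T : ℕ) (G : ℕ → SimpleGraph V)
    (h : ∀ i, 1 ≤ i → i ≤ T → DegLE (G i) Δ) :
    ∃ c : ℕ → V → Fin (5 * Δ + 1), TemporalColoring T G c := by
  have htrunc : ∀ i, DegLE (truncate G T i) Δ := fun i => by
    unfold truncate
    split_ifs with hi
    exacts [h i hi.1 hi.2, DegLE.bot Δ]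
  obtain ⟨c, hc⟩ := exists_temporalColoring_of_forall_degLE T (truncate G T) htrunc
  exact ⟨c, hc.of_truncate⟩
end

section
/- Let 𝒢 = (H_1, H_1, H_2, H_2, ..., H_{T/2}, H_{T/2}) be a temporal graph with each snapshot duplicated, where every H_i has maximum degree at most Δ. Then 𝒢 admits a temporal (3Δ+1)-coloring. -/
open SimpleGraph

/-! Use one coloring `d j` at both times `2j` and `2j + 1`, where the snapshots `H j` and
`H (j + 1)` meet, and choose it greedily: proper on `H j ⊔ H (j + 1)`, and at each vertex
different from the colors `d (j - 1)` gives to its `H j`-neighbors. This forbids at most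
`2Δ + Δ` colors per vertex, so `3Δ + 1` colors suffice. -/

namespace SimpleGraph

variable {V α : Type*}

theorem DegLE.sup {A B : SimpleGraph V} {a b : ℕ} (hA : DegLE A a) (hB : DegLE B b) :
    DegLE (A ⊔ B) (a + b) := fun v => by
  rw [neighborSet_sup]
  exact (Set.ncard_union_le _ _).trans (add_le_add (hA v) (hB v))

theorem DegLE.card_neighborFinset_le {A : SimpleGraph V} {Δ : ℕ} (hA : DegLE A Δ) (v : V)
    [Fintype (A.neighborSet v)] : (A.neighborFinset v).card ≤ Δ := by
  rw [neighborFinset_def, ← Set.ncard_eq_toFinset_card']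
  exact hA v

theorem exists_properColoring_mem_of_ncard_lt [Fintype V] (A : SimpleGraph V)
    (L : V → Finset α) (hL : ∀ v, (A.neighborSet v).ncard < (L v).card) :
    ∃ c : V → α, ProperColoring A c ∧ ∀ v, c v ∈ L v := by
  classical
  have hne : ∀ v, (L v).Nonempty := fun v => Finset.card_pos.mp (pos_of_gt (hL v))
  suffices ∀ s : Finset V, ∃ c : V → α,
      (∀ v, c v ∈ L v) ∧ ∀ u ∈ s, ∀ v ∈ s, A.Adj u v → c u ≠ c v by
    obtain ⟨c, hcL, hc⟩ := this Finset.univ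
    exact ⟨c, fun u v huv => hc u (Finset.mem_univ u) v (Finset.mem_univ v) huv, hcL⟩
  intro s
  induction s using Finset.induction_on with
  | empty => exact ⟨fun v => (hne v).choose, fun v => (hne v).choose_spec, by simp⟩
  | insert a s ha ih =>
    obtain ⟨c, hcL, hc⟩ := ih
    have hused : ((s.filter (A.Adj a)).image c).card < (L a).card := by
      refine Finset.card_image_le.trans_lt (lt_of_le_of_lt ?_ (hL a))
      rw [← Set.ncard_coe_finset]
      exact Set.ncard_le_ncard fun u hu => (Finset.mem_filter.mp hu).2
    obtain ⟨x, hxL, hx⟩ := Finset.exists_mem_notMem_of_card_lt_card hused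
    have hxc : ∀ u ∈ s, A.Adj a u → x ≠ c u := fun u hu hau hxu =>
      hx (Finset.mem_image.mpr ⟨u, Finset.mem_filter.mpr ⟨hu, hau⟩, hxu.symm⟩)
    have hne_a : ∀ u ∈ s, u ≠ a := fun u hu hua => ha (hua ▸ hu)
    refine ⟨Function.update c a x, fun v => ?_, fun u hu v hv huv => ?_⟩
    · rcases eq_or_ne v a with rfl | hva
      · simpa using hxL
      · simpa [hva] using hcL v
    rcases Finset.mem_insert.mp hu with rfl | hus <;> rcases Finset.mem_insert.mp hv with rfl | hvs
    · exact (A.ne_of_adj huv rfl).elim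
    · simpa [hne_a v hvs] using hxc v hvs huv
    · simpa [hne_a u hus] using (hxc u hus huv.symm).symm
    · simpa [hne_a u hus, hne_a v hvs] using hc u hus v hvs huv

theorem exists_properColoring_sup_compatible [Fintype V] [Fintype α] {A B : SimpleGraph V}
    {Δ : ℕ} (hA : DegLE A Δ) (hB : DegLE B Δ) (hα : 3 * Δ < Fintype.card α) (d : V → α) :
    ∃ c : V → α, ProperColoring (A ⊔ B) c ∧ ∀ u v, A.Adj u v → d u ≠ c v := by
  classical
  obtain ⟨c, hc, hcL⟩ := exists_properColoring_mem_of_ncard_lt (A ⊔ B)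
    (fun v => (Finset.univ \ (A.neighborFinset v).image d : Finset α)) fun v => by
      have hused := (Finset.card_image_le (s := A.neighborFinset v) (f := d)).trans
        (hA.card_neighborFinset_le v)
      rw [Finset.card_univ_sdiff]
      have := (hA.sup hB) v
      omega
  refine ⟨c, hc, fun u v huv hdc => ?_⟩
  have := hcL v
  simp only [Finset.mem_sdiff, Finset.mem_image, mem_neighborFinset] at this
  exact this.2 ⟨u, huv.symm, hdc⟩

theorem exists_seq_properColoring_compatible [Fintype V] [Fintype α] {Δ : ℕ}
    {H : ℕ → SimpleGraph V} (hH : ∀ i, DegLE (H i) Δ) (hα : 3 * Δ < Fintype.card α) :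
    ∃ d : ℕ → V → α, (∀ j, ProperColoring (H j ⊔ H (j + 1)) (d j)) ∧
      ∀ j u v, (H (j + 1)).Adj u v → d j u ≠ d (j + 1) v := by
  have : Nonempty α := Fintype.card_pos_iff.mp (by omega)
  choose next hproper hcompat using fun j (d : V → α) =>
    exists_properColoring_sup_compatible (hH j) (hH (j + 1)) hα d
  let d : ℕ → V → α := fun j => Nat.rec (next 0 fun _ => Classical.arbitrary α)
    (fun j dj => next (j + 1) dj) j
  refine ⟨d, fun j => ?_, fun j => hcompat (j + 1) (d j)⟩
  cases j <;> exact hproper _ _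

theorem smash_le_sup (G : ℕ → SimpleGraph V) (T i : ℕ) :
    Smash G T i ≤ G (i - 1) ⊔ G i ⊔ G (i + 1) := by
  unfold Smash
  gcongr <;> split_ifs <;> simp

theorem smash_duplicated_le (H : ℕ → SimpleGraph V) (T i : ℕ) :
    Smash (fun j => H ((j + 1) / 2)) T i ≤ H (i / 2) ⊔ H (i / 2 + 1) := by
  refine (smash_le_sup _ T i).trans (sup_le (sup_le ?_ ?_) ?_)
  · rw [show (i - 1 + 1) / 2 = i / 2 by omega]
    exact le_sup_left
  · rcases (by omega : (i + 1) / 2 = i / 2 ∨ (i + 1) / 2 = i / 2 + 1) with h | h <;> rw [h]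
    exacts [le_sup_left, le_sup_right]
  · rw [show (i + 1 + 1) / 2 = i / 2 + 1 by omega]
    exact le_sup_right

theorem temporalColoring_duplicated {H : ℕ → SimpleGraph V} {d : ℕ → V → α}
    (hproper : ∀ j, ProperColoring (H j ⊔ H (j + 1)) (d j))
    (hcompat : ∀ j u v, (H (j + 1)).Adj u v → d j u ≠ d (j + 1) v) (T : ℕ) :
    TemporalColoring T (fun j => H ((j + 1) / 2)) (fun i => d (i / 2)) := by
  refine ⟨fun i _ _ u v huv => hproper (i / 2) u v (smash_duplicated_le H T i huv),
    fun i _ _ => ?_⟩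
  obtain ⟨j, rfl | rfl⟩ := Nat.even_or_odd' i
  · simp only [show (2 * j + 1) / 2 = j by omega, show (2 * j + 1 + 1) / 2 = j + 1 by omega,
      show 2 * j / 2 = j by omega]
    exact hproper j
  · simp only [show (2 * j + 1 + 1) / 2 = j + 1 by omega,
      show (2 * j + 1 + 1 + 1) / 2 = j + 1 by omega, show (2 * j + 1) / 2 = j by omega]
    intro u v huv
    exact hcompat j u v (by simpa using huv)

end SimpleGraph

/-- If each snapshot is duplicated (`G (2i-1) = G (2i) = H i`) and every `H i` has
maximum degree at most `Δ`, then the temporal graph admits a temporal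
`(3Δ+1)`-coloring. -/
theorem statement15 {V : Type*} [Fintype V] (Δ m : ℕ) (H : ℕ → SimpleGraph V)
    (hH : ∀ i, DegLE (H i) Δ) :
    ∃ c : ℕ → V → Fin (3 * Δ + 1),
      TemporalColoring (2 * m) (fun j => H ((j + 1) / 2)) c := by
  obtain ⟨d, hproper, hcompat⟩ := exists_seq_properColoring_compatible hH
    (by simp : 3 * Δ < Fintype.card (Fin (3 * Δ + 1)))
  exact ⟨_, temporalColoring_duplicated hproper hcompat (2 * m)⟩
end

section
/- Let 𝒢 = (G_1,...,G_T) be a temporal graph with grow pace 1 (at most one edge added and at most one edge removed between consecutive snapshots) in which every snapshot is Δ-bounded. Then χ^t(𝒢) ≤ Δ+2. -/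
open SimpleGraph

/-! A proper coloring `c` of `G i ⊔ G (i + 1)` stays proper on `G i ⊔ G (i + 1) ⊔ G (i + 2)`
unless the single edge `xy` added at time `i + 2` is monochromatic. The single edge removed at
time `i + 1` misses an endpoint `z` of `xy`, so `z` has at most `Δ + 1` neighbors in the triple
union, and recoloring `z` with a color absent from them gives the next coloring, compatible with
`c`. The first coloring is greedy on `G 1 ⊔ G 2`, whose degrees are at most `Δ + 1`. -/

lemma ProperColoring.anti {V α : Type*} {H H' : SimpleGraph V} {c : V → α} (h : H ≤ H')
    (hc : ProperColoring H' c) : ProperColoring H c :=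
  fun _ _ huv => hc _ _ (h huv)

section Recolor

variable {V α : Type*} [DecidableEq V] {H : SimpleGraph V} {c : V → α} {z u v : V} {a : α}

lemma ne_update_of_notMem_image (ha : a ∉ c '' H.neighborSet z) (huv : H.Adj u v)
    (hc : v ≠ z → c u ≠ c v) : c u ≠ Function.update c z a v := by
  rcases eq_or_ne v z with rfl | hv
  · rw [Function.update_self]
    exact fun h => ha ⟨u, huv.symm, h⟩
  · rw [Function.update_of_ne hv]
    exact hc hv

lemma update_ne_update_of_notMem_image (ha : a ∉ c '' H.neighborSet z) (huv : H.Adj u v)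
    (hc : u ≠ z → v ≠ z → c u ≠ c v) :
    Function.update c z a u ≠ Function.update c z a v := by
  rcases eq_or_ne u z with rfl | hu
  · rw [Function.update_self, Function.update_of_ne huv.ne.symm]
    exact fun h => ha ⟨v, huv, h.symm⟩
  · rw [Function.update_of_ne hu]
    exact ne_update_of_notMem_image ha huv (hc hu)

end Recolor

lemma Sym2.exists_mem_forall_notMem {α : Type*} [Finite α] {D : Set (Sym2 α)} {x y : α}
    (hD : D.ncard ≤ 1) (hxy : s(x, y) ∉ D) (hne : x ≠ y) :
    ∃ z ∈ s(x, y), ∀ e ∈ D, z ∉ e := by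
  by_contra! h
  obtain ⟨e, he, hxe⟩ := h x (Sym2.mem_mk_left x y)
  obtain ⟨e', he', hye'⟩ := h y (Sym2.mem_mk_right x y)
  obtain rfl : e = e' := (Set.ncard_le_one_iff).mp hD he he'
  exact hxy ((Sym2.mem_and_mem_iff hne).mp ⟨hxe, hye'⟩ ▸ he)

section FiniteGraph

variable {V : Type*} [Finite V]

lemma exists_notMem_image_of_ncard_le {k : ℕ} (c : V → Fin (k + 1)) {N : Set V}
    (hN : N.ncard ≤ k) : ∃ a, a ∉ c '' N := by
  have hlt : (c '' N).ncard < (Set.univ : Set (Fin (k + 1))).ncard := by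
    rw [Set.ncard_univ, Nat.card_eq_fintype_card, Fintype.card_fin]
    exact Nat.lt_succ_of_le ((Set.ncard_image_le).trans hN)
  obtain ⟨a, -, ha⟩ := Set.exists_mem_notMem_of_ncard_lt_ncard hlt
  exact ⟨a, ha⟩

lemma exists_properColoring_of_degLE {H : SimpleGraph V} {Δ : ℕ} (hH : DegLE H (Δ + 1)) :
    ∃ c : V → Fin (Δ + 2), ProperColoring H c := by
  classical
  have := Fintype.ofFinite V
  suffices ∀ s : Finset V, ∃ c : V → Fin (Δ + 2),
      ∀ u ∈ s, ∀ v ∈ s, H.Adj u v → c u ≠ c v by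
    obtain ⟨c, hc⟩ := this Finset.univ
    exact ⟨c, fun u v => hc u (Finset.mem_univ u) v (Finset.mem_univ v)⟩
  intro s
  induction s using Finset.induction_on with
  | empty => exact ⟨0, by simp⟩
  | insert z s _ ih =>
    obtain ⟨c, hc⟩ := ih
    obtain ⟨a, ha⟩ := exists_notMem_image_of_ncard_le c (hH z)
    refine ⟨Function.update c z a, fun u hu v hv huv => ?_⟩
    refine update_ne_update_of_notMem_image ha huv fun hu' hv' => ?_
    exact hc u ((Finset.mem_insert.mp hu).resolve_left hu') v
      ((Finset.mem_insert.mp hv).resolve_left hv') huv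

lemma DegLE.sup_of_ncard_sdiff_le_one {B C : SimpleGraph V} {Δ : ℕ} (hB : DegLE B Δ)
    (hCB : (C.edgeSet \ B.edgeSet).ncard ≤ 1) : DegLE (B ⊔ C) (Δ + 1) := by
  intro v
  have hsub : (B ⊔ C).neighborSet v ⊆
      B.neighborSet v ∪ {w | s(v, w) ∈ C.edgeSet \ B.edgeSet} := by
    rintro w (hw | hw)
    · exact Or.inl hw
    · by_cases hBw : B.Adj v w
      · exact Or.inl hBw
      · exact Or.inr ⟨hw, hBw⟩
  have hnew : ({w | s(v, w) ∈ C.edgeSet \ B.edgeSet} : Set V).ncard ≤ 1 :=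
    (Set.ncard_le_ncard_of_injOn (fun w => s(v, w)) (fun _ hw => hw)
      (fun _ _ _ _ h => Sym2.congr_right.mp h)).trans hCB
  calc ((B ⊔ C).neighborSet v).ncard
      ≤ (B.neighborSet v ∪ {w | s(v, w) ∈ C.edgeSet \ B.edgeSet}).ncard :=
        Set.ncard_le_ncard hsub
    _ ≤ (B.neighborSet v).ncard + ({w | s(v, w) ∈ C.edgeSet \ B.edgeSet} : Set V).ncard :=
        Set.ncard_union_le _ _
    _ ≤ Δ + 1 := add_le_add (hB v) hnew

lemma exists_compatible_properColoring {A B C : SimpleGraph V} {Δ : ℕ} (hB : DegLE B Δ)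
    (hAB : (A.edgeSet \ B.edgeSet).ncard ≤ 1) (hCB : (C.edgeSet \ B.edgeSet).ncard ≤ 1)
    {c : V → Fin (Δ + 2)} (hc : ProperColoring (A ⊔ B) c) :
    ∃ c' : V → Fin (Δ + 2), ProperColoring (A ⊔ B ⊔ C) c' ∧ Compatible A B c c' := by
  classical
  by_cases hC : C ≤ A ⊔ B
  · exact ⟨c, by rwa [sup_eq_left.mpr hC], hc⟩
  obtain ⟨x, y, hCxy, hxy⟩ : ∃ x y, C.Adj x y ∧ ¬ (A ⊔ B).Adj x y := by
    simpa [SimpleGraph.le_iff_adj] using hC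
  have hnew : ∀ u v, C.Adj u v → ¬ B.Adj u v → s(u, v) = s(x, y) := fun u v huv hBuv =>
    (Set.ncard_le_one_iff).mp hCB ⟨huv, hBuv⟩ ⟨hCxy, fun h => hxy (Or.inr h)⟩
  obtain ⟨z, hz, hzA⟩ := Sym2.exists_mem_forall_notMem hAB
    (fun h => hxy (Or.inl h.1)) hCxy.ne
  have hdeg : ((A ⊔ B ⊔ C).neighborSet z).ncard ≤ Δ + 1 := by
    refine le_trans (Set.ncard_le_ncard ?_) (hB.sup_of_ncard_sdiff_le_one hCB z)
    rintro w ((hA | hB') | hC')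
    · by_contra hBC
      exact hzA _ ⟨hA, fun h => hBC (Or.inl h)⟩ (Sym2.mem_mk_left z w)
    · exact Or.inl hB'
    · exact Or.inr hC'
  obtain ⟨a, ha⟩ := exists_notMem_image_of_ncard_le c hdeg
  refine ⟨Function.update c z a, fun u v huv => ?_, fun u v huv => ?_⟩
  · refine update_ne_update_of_notMem_image ha huv fun hu hv => ?_
    rcases huv with hAB' | hC'
    · exact hc u v hAB'
    by_cases hBuv : B.Adj u v
    · exact hc u v (Or.inr hBuv)
    · have : z ∈ s(u, v) := hnew u v hC' hBuv ▸ hz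
      rcases Sym2.mem_iff.mp this with h | h
      exacts [(hu h.symm).elim, (hv h.symm).elim]
  · exact ne_update_of_notMem_image ha (le_sup_left (b := C) huv) fun _ => hc u v huv

end FiniteGraph

lemma exists_seq_of_exists_step {α : Type*} [Nonempty α] {P : ℕ → α → Prop}
    {R : ℕ → α → α → Prop} {T : ℕ} (hbase : 1 ≤ T → ∃ a, P 1 a)
    (hstep : ∀ i a, 1 ≤ i → i < T → P i a → ∃ b, P (i + 1) b ∧ R i a b) :
    ∃ f : ℕ → α, (∀ i, 1 ≤ i → i ≤ T → P i (f i)) ∧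
      ∀ i, 1 ≤ i → i < T → R i (f i) (f (i + 1)) := by
  by_cases hT : 1 ≤ T
  swap
  · exact ⟨fun _ => Classical.arbitrary α, by omega, by omega⟩
  obtain ⟨a₀, ha₀⟩ := hbase hT
  choose! g hg using hstep
  let f : ℕ → α := fun n => Nat.rec a₀ (fun i a => if i = 0 then a₀ else g i a) n
  have hf : ∀ i, 1 ≤ i → f (i + 1) = g i (f i) := fun i hi => if_neg (by omega)
  have hP : ∀ i, 1 ≤ i → i ≤ T → P i (f i) := by
    intro i hi
    induction i, hi using Nat.le_induction with
    | base => exact fun _ => ha₀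
    | succ i hi ih =>
      intro hiT
      rw [hf i hi]
      exact (hg i (f i) hi (by omega) (ih (by omega))).1
  refine ⟨f, hP, fun i hi hiT => ?_⟩
  rw [hf i hi]
  exact (hg i (f i) hi hiT (hP i hi hiT.le)).2

/-- A temporal graph with grow pace 1 whose snapshots are all `Δ`-bounded admits a
temporal `(Δ+2)`-coloring. -/
theorem statement16 {V : Type*} [Fintype V] (Δ T : ℕ) (G : ℕ → SimpleGraph V)
    (hdeg : ∀ i, 1 ≤ i → i ≤ T → DegLE (G i) Δ)
    (hpace : ∀ i, 1 ≤ i → i < T →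
      ((G (i + 1)).edgeSet \ (G i).edgeSet).ncard ≤ 1 ∧
      ((G i).edgeSet \ (G (i + 1)).edgeSet).ncard ≤ 1) :
    ∃ c : ℕ → V → Fin (Δ + 2), TemporalColoring T G c := by
  set next : ℕ → SimpleGraph V := fun i => if i < T then G (i + 1) else ⊥
  have hnext : ∀ i, 1 ≤ i → ((next i).edgeSet \ (G i).edgeSet).ncard ≤ 1 := by
    intro i hi
    by_cases hiT : i < T
    · simpa [next, hiT] using (hpace i hi hiT).1
    · simp [next, hiT]
  have hsmash_one : Smash G T 1 = G 1 ⊔ next 1 := by simp [Smash, next]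
  have hsmash_succ : ∀ i, 1 ≤ i → Smash G T (i + 1) = G i ⊔ G (i + 1) ⊔ next (i + 1) := by
    intro i hi
    simp [Smash, next, show 2 ≤ i + 1 by omega]
  have hsmash_ge : ∀ i, i < T → G i ⊔ G (i + 1) ≤ Smash G T i := by
    intro i hiT
    simp only [Smash, if_pos hiT]
    exact sup_le_sup_right le_sup_right _
  refine exists_seq_of_exists_step (fun hT => ?_) fun i c hi hiT hc => ?_
  · rw [hsmash_one]
    exact exists_properColoring_of_degLE
      ((hdeg 1 le_rfl hT).sup_of_ncard_sdiff_le_one (hnext 1 le_rfl))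
  · rw [hsmash_succ i hi]
    exact exists_compatible_properColoring (hdeg (i + 1) (by omega) hiT) (hpace i hi hiT).2
      (hnext (i + 1) (by omega)) (hc.anti (hsmash_ge i hiT))
end
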